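/- In a proper unital *-ring A with A_Σ salient and A_+A_+ ∩ A_sa ⊆ A_+: every a ∈ A_+ lies in the double commutant of {a^2}, i.e. every b ∈ A commuting with a^2 also commutes with a. -/

import Mathlib

open Pointwise

/-- Finite sums of elements of the form `star a * a`. -/
def sSums (A : Type*) [Ring A] [StarRing A] : Set A :=
  (AddSubmonoid.closure {x : A | ∃ a : A, x = star a * a} : Set A)

/-- The *-positive elements. -/
def pos (A : Type*) [Ring A] [StarRing A] : Set A :=
  {a : A | ∃ n : ℕ, 0 < n ∧ n • a ∈ sSums A}

/-- The *-accretive elements. -/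
def accr (A : Type*) [Ring A] [StarRing A] : Set A :=
  {a : A | a + star a ∈ pos A}

/-- The order `a ⪯ b ⟺ b - a ∈ 𝔯`. -/
def ple {A : Type*} [Ring A] [StarRing A] (a b : A) : Prop := b - a ∈ accr A

/-- The cone `𝔠`. -/
def cone (A : Type*) [Ring A] [StarRing A] : Set A :=
  {a : A | ∃ n : ℕ, 0 < n ∧ ple (star a * a) (n • a)}

/-- The ball `𝔅`. -/
def ball (A : Type*) [Ring A] [StarRing A] : Set A :=
  {a : A | ple (star a * a) 1}

/-!
Let `c = a * b - b * a`. Since `b` commutes with `a²`, `c` anticommutes with `a`, and so does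
`star c`. For a positive `p` anticommuting with `c` and `star c`, the element `star c * c * p`
is a self-adjoint product of positives, while its negative `star c * p * c` is positive too;
hence `star c * p * c = 0`, and then `star (p * c) * (p * c) = -(star c * p * c) * p = 0`, so
`p * c = 0`. Applying this to the commutators of `a` with `b`, `star b` and `star b * b`, one
finds that `star c * c` is a combination of terms that vanish, so `c = 0`.
-/

section PositiveCommutant

variable {A : Type*} [Ring A] [StarRing A]

lemma star_mul_self_mem_sSums (x : A) : star x * x ∈ sSums A :=
  AddSubmonoid.subset_closure ⟨x, rfl⟩

lemma isSelfAdjoint_of_mem_sSums {z : A} (hz : z ∈ sSums A) : IsSelfAdjoint z := by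
  have : AddSubmonoid.closure {x : A | ∃ a : A, x = star a * a} ≤
      (selfAdjoint A).toAddSubmonoid :=
    AddSubmonoid.closure_le.2 fun _ ⟨a, ha⟩ => ha ▸ IsSelfAdjoint.star_mul_self a
  exact this hz

lemma star_mul_mul_mem_sSums {z : A} (hz : z ∈ sSums A) (q : A) :
    star q * z * q ∈ sSums A := by
  have : AddSubmonoid.closure {x : A | ∃ a : A, x = star a * a} ≤
      (AddSubmonoid.closure {x : A | ∃ a : A, x = star a * a}).comap
        ((AddMonoidHom.mulRight q).comp (AddMonoidHom.mulLeft (star q))) :=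
    AddSubmonoid.closure_le.2 fun _ ⟨a, ha⟩ => by
      subst ha
      change star q * (star a * a) * q ∈ sSums A
      rw [show star q * (star a * a) * q = star (a * q) * (a * q) by simp [mul_assoc]]
      exact star_mul_self_mem_sSums (a * q)
  exact this hz

lemma eq_zero_of_mem_sSums_of_neg_mem (salient : sSums A ∩ (-sSums A) = {0}) {z : A}
    (hz : z ∈ sSums A) (hz' : -z ∈ sSums A) : z = 0 := by
  have : z ∈ sSums A ∩ (-sSums A) := ⟨hz, hz'⟩
  rwa [salient] at this

lemma eq_zero_of_nsmul_eq_zero (proper : ∀ a : A, star a * a = 0 → a = 0)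
    (salient : sSums A ∩ (-sSums A) = {0}) {n : ℕ} (hn : 0 < n) {x : A}
    (hx : n • x = 0) : x = 0 := by
  apply proper
  have hmem := star_mul_self_mem_sSums x
  refine eq_zero_of_mem_sSums_of_neg_mem salient hmem ?_
  obtain ⟨m, rfl⟩ := Nat.exists_eq_add_one_of_ne_zero hn.ne'
  have hsum : m • (star x * x) + star x * x = 0 := by
    rw [← succ_nsmul, ← mul_smul_comm, hx, mul_zero]
  rw [← eq_neg_of_add_eq_zero_left hsum]
  exact AddSubmonoid.nsmul_mem _ hmem m

lemma star_mul_self_mem_pos (x : A) : star x * x ∈ pos A :=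
  ⟨1, one_pos, by simpa using star_mul_self_mem_sSums x⟩

lemma star_mul_mul_mem_pos {p : A} (hp : p ∈ pos A) (q : A) : star q * p * q ∈ pos A := by
  obtain ⟨n, hn, hnp⟩ := hp
  refine ⟨n, hn, ?_⟩
  rw [← smul_mul_assoc, ← mul_smul_comm]
  exact star_mul_mul_mem_sSums hnp q

lemma eq_zero_of_mem_pos_of_neg_mem_pos (proper : ∀ a : A, star a * a = 0 → a = 0)
    (salient : sSums A ∩ (-sSums A) = {0}) {s : A} (hs : s ∈ pos A) (hs' : -s ∈ pos A) :
    s = 0 := by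
  obtain ⟨n, hn, hns⟩ := hs
  obtain ⟨m, hm, hms⟩ := hs'
  refine eq_zero_of_nsmul_eq_zero proper salient (Nat.mul_pos hm hn) ?_
  refine eq_zero_of_mem_sSums_of_neg_mem salient ?_ ?_
  · rw [mul_smul]
    exact AddSubmonoid.nsmul_mem _ hns m
  · rw [mul_comm, mul_smul, ← smul_neg, ← smul_neg]
    exact AddSubmonoid.nsmul_mem _ hms n

lemma star_eq_of_mem_pos (proper : ∀ a : A, star a * a = 0 → a = 0)
    (salient : sSums A ∩ (-sSums A) = {0}) {p : A} (hp : p ∈ pos A) : star p = p := by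
  obtain ⟨n, hn, hnp⟩ := hp
  refine sub_eq_zero.mp (eq_zero_of_nsmul_eq_zero proper salient hn ?_)
  rw [smul_sub, ← star_nsmul, (isSelfAdjoint_of_mem_sSums hnp).star_eq, sub_self]

lemma mul_eq_zero_of_anticommute (proper : ∀ a : A, star a * a = 0 → a = 0)
    (salient : sSums A ∩ (-sSums A) = {0})
    (posmul : ∀ x : A, (∃ a ∈ pos A, ∃ b ∈ pos A, x = a * b) → star x = x → x ∈ pos A)
    {p c : A} (hp : p ∈ pos A) (hc : p * c + c * p = 0)
    (hc' : p * star c + star c * p = 0) : p * c = 0 := by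
  have sp := star_eq_of_mem_pos proper salient hp
  have hcp : c * p = -(p * c) := eq_neg_of_add_eq_zero_right hc
  have hc'p : star c * p = -(p * star c) := eq_neg_of_add_eq_zero_right hc'
  have hcomm : star c * c * p = p * (star c * c) := by
    rw [mul_assoc, hcp, mul_neg, ← mul_assoc, hc'p, neg_mul, neg_neg, mul_assoc]
  have hpos : star c * c * p ∈ pos A :=
    posmul _ ⟨_, star_mul_self_mem_pos c, p, hp, rfl⟩ (by simp [sp, hcomm])
  have hneg : star c * c * p = -(star c * p * c) := by
    rw [mul_assoc, hcp, mul_neg, ← mul_assoc]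
  have hcpc : star c * p * c = 0 := by
    refine eq_zero_of_mem_pos_of_neg_mem_pos proper salient (star_mul_mul_mem_pos hp c) ?_
    rwa [← hneg]
  apply proper
  calc star (p * c) * (p * c) = star c * p * (p * c) := by rw [star_mul, sp]
    _ = -(star c * p * c * p) := by rw [eq_neg_of_add_eq_zero_left hc]; noncomm_ring
    _ = 0 := by rw [hcpc, zero_mul, neg_zero]

lemma mul_commutator_eq_zero_of_commute_sq (proper : ∀ a : A, star a * a = 0 → a = 0)
    (salient : sSums A ∩ (-sSums A) = {0})
    (posmul : ∀ x : A, (∃ a ∈ pos A, ∃ b ∈ pos A, x = a * b) → star x = x → x ∈ pos A)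
    {a x : A} (ha : a ∈ pos A) (hx : Commute x (a * a)) : a * (a * x - x * a) = 0 := by
  have sa := star_eq_of_mem_pos proper salient ha
  have anticomm : ∀ y : A, Commute y (a * a) → a * (a * y - y * a) + (a * y - y * a) * a = 0 :=
    fun y hy => calc a * (a * y - y * a) + (a * y - y * a) * a
        _ = a * a * y - y * (a * a) := by noncomm_ring
        _ = 0 := sub_eq_zero.mpr hy.eq.symm
  have hx' : Commute (star x) (a * a) := by simpa [sa] using hx.star_star
  have hstar : star (a * x - x * a) = -(a * star x - star x * a) := by
    rw [star_sub, star_mul, star_mul, sa]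
    abel
  refine mul_eq_zero_of_anticommute proper salient posmul ha (anticomm x hx) ?_
  rw [hstar, mul_neg, neg_mul, ← neg_add, anticomm _ hx', neg_zero]

end PositiveCommutant

theorem stmt18 {A : Type*} [Ring A] [StarRing A]
    (proper : ∀ a : A, star a * a = 0 → a = 0)
    (salient : sSums A ∩ (-sSums A) = {0})
    (posmul : ∀ x : A, (∃ a ∈ pos A, ∃ b ∈ pos A, x = a * b) → star x = x → x ∈ pos A)
    (a : A) (ha : a ∈ pos A) (b : A) (hb : b * (a * a) = (a * a) * b) :
    b * a = a * b := by
  have sa := star_eq_of_mem_pos proper salient ha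
  have hb' : Commute (star b) (a * a) := by simpa [sa] using Commute.star_star hb
  have hab := mul_commutator_eq_zero_of_commute_sq proper salient posmul ha hb
  have hab' := mul_commutator_eq_zero_of_commute_sq proper salient posmul ha hb'
  have habb := mul_commutator_eq_zero_of_commute_sq proper salient posmul ha (hb'.mul_left hb)
  suffices star (a * b - b * a) * (a * b - b * a) = 0 from
    (sub_eq_zero.mp (proper _ this)).symm
  calc star (a * b - b * a) * (a * b - b * a)
      = a * (a * star b - star b * a) * b + star b * (a * (a * b - b * a))
        - a * (a * (star b * b) - star b * b * a) := by
        rw [star_sub, star_mul, star_mul, sa]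
        noncomm_ring
    _ = 0 := by rw [hab, hab', habb, zero_mul, mul_zero, add_zero, sub_zero]
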